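/- arXiv:0905.4093 — 3 statements merged into one kernel-verified Lean document; each statement's English description precedes it below -/
import Mathlib

section
/- Let p be a projection, l a linear endomorphism leaving range p invariant and acting as the identity on ker p, and set l' = l ∘ p + (1 - p). Suppose g₀ = p - l'² is invertible. Then g₀⁻¹ - l' ∘ g₀⁻¹ ∘ l' = p. -/
theorem projection_pencil_identity
    {V : Type*} [AddCommGroup V] [Module ℝ V] [FiniteDimensional ℝ V]
    (p l : Module.End ℝ V) (hp : p * p = p)
    (hinv : ∀ u ∈ LinearMap.range p, l u ∈ LinearMap.range p)
    (hker : ∀ v ∈ LinearMap.ker p, l v = v)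
    (l' : Module.End ℝ V) (hl' : l' = l * p + (1 - p))
    (g₀ : Module.End ℝ V) (hg₀ : g₀ = p - l' * l')
    (g₀inv : Module.End ℝ V) (h1 : g₀inv * g₀ = 1) (h2 : g₀ * g₀inv = 1) :
    g₀inv - l' * g₀inv * l' = p := by
  set a : Module.End ℝ V := l * p with ha
  have f2 : p * a = a := by
    ext x
    have hmem : l (p x) ∈ LinearMap.range p := hinv _ ⟨x, rfl⟩
    obtain ⟨y, hy⟩ := hmem
    have hpy : p (p y) = p y := LinearMap.ext_iff.mp hp y
    show p ((l * p) x) = (l * p) x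
    simp only [Module.End.mul_apply] at *
    rw [← hy, hpy]
  have f3 : a * p = a := by rw [ha, mul_assoc, hp]
  have f4 : p * (a * a) = a * a := by rw [← mul_assoc, f2]
  have fC : l * (1 - p) = 1 - p := by
    ext x
    have hmem : (1 - p) x ∈ LinearMap.ker p := by
      simp only [LinearMap.mem_ker, LinearMap.sub_apply, Module.End.one_apply, map_sub]
      have : p (p x) = p x := LinearMap.ext_iff.mp hp x
      simp [this]
    exact hker _ hmem
  have hll : l' * l' = a * a + (1 - p) := by
    rw [hl']; noncomm_ring [hp, f2, f3, f4]
  have hg : g₀ = p - a * a - (1 - p) := by rw [hg₀, hll]; abel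
  have key1 : g₀ * p = 1 - l' * l' := by
    rw [hg, hll]; noncomm_ring [hp, f2, f3, f4]
  have key2 : g₀ * l' = l' * g₀ := by
    rw [hg, hl']; noncomm_ring [hp, f2, f3, f4]
  have hcomm : l' * g₀inv = g₀inv * l' := by
    calc l' * g₀inv = g₀inv * g₀ * (l' * g₀inv) := by rw [h1, one_mul]
      _ = g₀inv * (g₀ * l') * g₀inv := by noncomm_ring
      _ = g₀inv * l' * (g₀ * g₀inv) := by rw [key2]; noncomm_ring
      _ = g₀inv * l' := by rw [h2, mul_one]
  calc g₀inv - l' * g₀inv * l'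
      = g₀inv - g₀inv * (l' * l') := by rw [hcomm, mul_assoc]
    _ = g₀inv * (1 - l' * l') := by rw [mul_sub, mul_one]
    _ = g₀inv * (g₀ * p) := by rw [key1]
    _ = p := by rw [← mul_assoc, h1, one_mul]
end

section
/- Let g₀ be an endomorphism, λ, μ real numbers with μ ≠ 0, g_μ invertible with g_μ⁻¹ = g₀⁻¹ - μ • 1 (g₀ invertible), and l_λ an endomorphism commuting with g₀ satisfying l_λ² = 1 - λ • g₀. Then λ • g₀ - μ • (l_λ ∘ g_μ ∘ l_λ) = (λ - μ) • g_μ. -/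
theorem lemma12_algebraic_identity
    {V : Type*} [AddCommGroup V] [Module ℝ V] [FiniteDimensional ℝ V]
    (lam mu : ℝ) (hmu : mu ≠ 0)
    (g₀ g₀inv gmu gmuinv llam : Module.End ℝ V)
    (hg1 : g₀inv * g₀ = 1) (hg2 : g₀ * g₀inv = 1)
    (hm1 : gmuinv * gmu = 1) (hm2 : gmu * gmuinv = 1)
    (hconf : gmuinv = g₀inv - mu • 1)
    (hcomm : llam * g₀ = g₀ * llam)
    (hsq : llam * llam = 1 - lam • g₀) :
    lam • g₀ - mu • (llam * gmu * llam) = (lam - mu) • gmu := by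
  have key : ∀ a b binv : Module.End ℝ V, binv * b = 1 → b * binv = 1 →
      a * b = b * a → a * binv = binv * a := by
    intro a b binv hb1 hb2 hab
    calc a * binv = binv * (b * a) * binv := by
          rw [← mul_assoc binv b a, hb1, one_mul]
      _ = binv * (a * b) * binv := by rw [hab]
      _ = binv * a := by rw [mul_assoc, mul_assoc, hb2, mul_one]
  have h1 : llam * g₀inv = g₀inv * llam := key llam g₀ g₀inv hg1 hg2 hcomm
  have h2 : llam * gmuinv = gmuinv * llam := by
    rw [hconf]
    simp [mul_sub, sub_mul, h1, mul_smul_comm, smul_mul_assoc]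
  have h3 : llam * gmu = gmu * llam := key llam gmuinv gmu hm2 hm1 h2
  have h4 : gmu - mu • (gmu * g₀) = g₀ := by
    have e : gmu * (g₀inv - mu • 1) * g₀ = g₀ := by rw [← hconf, hm2, one_mul]
    simpa [mul_sub, sub_mul, mul_assoc, hg1, mul_smul_comm, smul_mul_assoc] using e
  have h5 : llam * gmu * llam = gmu - lam • (gmu * g₀) := by
    rw [h3, mul_assoc, hsq, mul_sub, mul_one, mul_smul_comm]
  rw [h5]; nth_rewrite 1 [← h4]
  module
end

section
/- Under the hypotheses of the previous identity, if moreover B is a symmetric bilinear form with all the maps self-adjoint, and u satisfies B(u, g₀ u) = 0 and B(u, g_μ u) = 0, then B(l_λ u, g_μ (l_λ u)) = 0; that is, the point l_λ(u) lies on the quadric defined by g_μ. -/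
theorem ivory_path_stays_on_quadric
    {V : Type*} [AddCommGroup V] [Module ℝ V] [FiniteDimensional ℝ V]
    (B : LinearMap.BilinForm ℝ V) (hBsymm : ∀ x y, B x y = B y x)
    (lam mu : ℝ) (hmu : mu ≠ 0)
    (g₀ g₀inv gmu gmuinv llam : Module.End ℝ V)
    (hg1 : g₀inv * g₀ = 1) (hg2 : g₀ * g₀inv = 1)
    (hm1 : gmuinv * gmu = 1) (hm2 : gmu * gmuinv = 1)
    (hconf : gmuinv = g₀inv - mu • 1)
    (hcomm : llam * g₀ = g₀ * llam)
    (hsq : llam * llam = 1 - lam • g₀)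
    (hsa0 : ∀ x y, B (g₀ x) y = B x (g₀ y))
    (hsam : ∀ x y, B (gmu x) y = B x (gmu y))
    (hsal : ∀ x y, B (llam x) y = B x (llam y))
    (u : V) (hu0 : B u (g₀ u) = 0) (humu : B u (gmu u) = 0) :
    B (llam u) (gmu (llam u)) = 0 := by
  -- llam commutes with g₀inv
  have hinv0 : llam * g₀inv = g₀inv * llam := by
    calc llam * g₀inv = (g₀inv * g₀) * llam * g₀inv := by rw [hg1, one_mul]
      _ = (g₀inv * (g₀ * llam)) * g₀inv := by rw [mul_assoc g₀inv g₀ llam]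
      _ = (g₀inv * (llam * g₀)) * g₀inv := by rw [← hcomm]
      _ = g₀inv * (llam * (g₀ * g₀inv)) := by rw [mul_assoc, mul_assoc]
      _ = g₀inv * llam := by rw [hg2, mul_one]
  -- llam commutes with gmuinv
  have hlm : llam * gmuinv = gmuinv * llam := by
    rw [hconf, mul_sub, sub_mul, hinv0, mul_smul_comm, smul_mul_assoc, mul_one, one_mul]
  -- llam commutes with gmu
  have hlmu : llam * gmu = gmu * llam := by
    calc llam * gmu = gmu * gmuinv * llam * gmu := by rw [hm2, one_mul]
      _ = gmu * (gmuinv * llam) * gmu := by rw [mul_assoc gmu]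
      _ = gmu * (llam * gmuinv) * gmu := by rw [hlm]
      _ = gmu * llam * (gmuinv * gmu) := by rw [mul_assoc gmu, mul_assoc, mul_assoc]
      _ = gmu * llam := by rw [hm1, mul_one]
  -- g₀ commutes with gmuinv
  have h0minv : g₀ * gmuinv = gmuinv * g₀ := by
    rw [hconf, mul_sub, sub_mul, hg2, hg1, mul_smul_comm, smul_mul_assoc, mul_one, one_mul]
  -- g₀ commutes with gmu
  have h0mu : g₀ * gmu = gmu * g₀ := by
    calc g₀ * gmu = gmu * gmuinv * g₀ * gmu := by rw [hm2, one_mul]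
      _ = gmu * (gmuinv * g₀) * gmu := by rw [mul_assoc gmu]
      _ = gmu * (g₀ * gmuinv) * gmu := by rw [h0minv]
      _ = gmu * g₀ * (gmuinv * gmu) := by rw [mul_assoc gmu, mul_assoc, mul_assoc]
      _ = gmu * g₀ := by rw [hm1, mul_one]
  -- key identity: mu • (g₀ * gmu) = gmu - g₀
  have hkey : mu • (g₀ * gmu) = gmu - g₀ := by
    have h1 : g₀ * gmuinv = 1 - mu • g₀ := by
      rw [hconf, mul_sub, hg2, mul_smul_comm, mul_one]
    have h2 : (1 - mu • g₀) * gmu = g₀ := by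
      rw [← h1, mul_assoc, hm1, mul_one]
    have h3 : gmu - mu • (g₀ * gmu) = g₀ := by
      calc gmu - mu • (g₀ * gmu) = (1 - mu • g₀) * gmu := by
            rw [sub_mul, one_mul, smul_mul_assoc]
        _ = g₀ := h2
    calc mu • (g₀ * gmu) = gmu - (gmu - mu • (g₀ * gmu)) := (sub_sub_cancel _ _).symm
      _ = gmu - g₀ := by rw [h3]
  -- hence B u (g₀ (gmu u)) = 0
  have hmix : B u (g₀ (gmu u)) = 0 := by
    have := congrArg (fun f : Module.End ℝ V => B u (f u)) hkey
    simp only [LinearMap.smul_apply, Module.End.mul_apply,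
      LinearMap.sub_apply, map_smul, map_sub, smul_eq_mul] at this
    rw [hu0, humu, sub_zero] at this
    exact (mul_eq_zero.mp this).resolve_left hmu
  -- main computation
  have hop : llam * (gmu * llam) = gmu - lam • (g₀ * gmu) := by
    calc llam * (gmu * llam) = (llam * gmu) * llam := by rw [mul_assoc]
      _ = gmu * (llam * llam) := by rw [hlmu, mul_assoc]
      _ = gmu * (1 - lam • g₀) := by rw [hsq]
      _ = gmu - lam • (gmu * g₀) := by rw [mul_sub, mul_one, mul_smul_comm]
      _ = gmu - lam • (g₀ * gmu) := by rw [h0mu]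
  have h4 : B (llam u) (gmu (llam u)) = B u ((llam * (gmu * llam)) u) := by
    rw [hsal]; rfl
  rw [h4, hop]
  simp only [LinearMap.sub_apply, LinearMap.smul_apply, Module.End.mul_apply, map_sub, map_smul,
    smul_eq_mul]
  rw [humu, hmix]
  ring
end
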